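/- For every θ ∈ (0,1), every ε > 0, and every t ≥ ε^θ: ∫_0^{t−ε^θ} ∫_ℝ e^{−2(t−s)ξ²} (1 − e^{−εξ²})² dξ ds ≤ (1/2) · (∫_ℝ (1 − e^{−η²})² η^{−2} dη) · ε^{1/2}, and the constant ∫_ℝ (1 − e^{−η²})² η^{−2} dη is finite. -/

import Mathlib

/-!
Swap the integrals (the integrand is dominated by a Gaussian in `ξ`, uniformly for `s < t - ε^θ`).
For fixed `ξ` the `s`-integral of `e^{-2(t-s)ξ²}` is at most `1 / (2ξ²)`, and the substitution
`η = √ε ξ` turns `∫ (1 - e^{-εξ²})² / ξ² dξ` into `√ε ∫ (1 - e^{-η²})² / η² dη`. The latter is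
finite because its integrand is at most `min(1, 1/η²) ≤ 2 / (1 + η²)`.
-/

open MeasureTheory Real

lemma one_sub_exp_neg_nonneg {x : ℝ} (hx : 0 ≤ x) : 0 ≤ 1 - exp (-x) := by
  simpa using exp_le_one_iff.mpr (neg_nonpos.mpr hx)

lemma sq_one_sub_exp_neg_le_one {x : ℝ} (hx : 0 ≤ x) : (1 - exp (-x)) ^ 2 ≤ 1 :=
  pow_le_one₀ (one_sub_exp_neg_nonneg hx) (by linarith [exp_pos (-x)])

lemma sq_one_sub_exp_neg_sq_div_sq_le (η : ℝ) :
    (1 - exp (-η ^ 2)) ^ 2 / η ^ 2 ≤ 2 * (1 + η ^ 2)⁻¹ := by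
  rcases eq_or_ne η 0 with rfl | hη
  · simp
  have hη2 : 0 < η ^ 2 := by positivity
  have h0 := one_sub_exp_neg_nonneg hη2.le
  have hle_sq : 1 - exp (-η ^ 2) ≤ η ^ 2 := by linarith [one_sub_le_exp_neg (η ^ 2)]
  have hle_one := sq_one_sub_exp_neg_le_one hη2.le
  rw [← div_eq_mul_inv, div_le_div_iff₀ hη2 (by positivity)]
  rcases le_total (η ^ 2) 1 with h | h
  · nlinarith [mul_le_mul hle_sq hle_sq h0 hη2.le]
  · nlinarith

lemma integrable_sq_one_sub_exp_neg_sq_div_sq :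
    Integrable (fun η : ℝ => (1 - exp (-η ^ 2)) ^ 2 / η ^ 2) :=
  (integrable_inv_one_add_sq.const_mul 2).mono' (Measurable.aestronglyMeasurable (by fun_prop))
    (.of_forall fun η => by
      rw [norm_of_nonneg (by positivity)]
      exact sq_one_sub_exp_neg_sq_div_sq_le η)

lemma sq_one_sub_exp_neg_mul_sq_div_sq {ε : ℝ} (hε : 0 ≤ ε) (ξ : ℝ) :
    (1 - exp (-ε * ξ ^ 2)) ^ 2 / ξ ^ 2
      = ε * ((1 - exp (-(√ε * ξ) ^ 2)) ^ 2 / (√ε * ξ) ^ 2) := by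
  rcases eq_or_ne ε 0 with rfl | hε0
  · simp
  rw [mul_pow, sq_sqrt hε, neg_mul_eq_neg_mul]
  field_simp

lemma integral_sq_one_sub_exp_neg_mul_sq_div_sq {ε : ℝ} (hε : 0 < ε) :
    ∫ ξ : ℝ, (1 - exp (-ε * ξ ^ 2)) ^ 2 / ξ ^ 2
      = √ε * ∫ η : ℝ, (1 - exp (-η ^ 2)) ^ 2 / η ^ 2 := by
  have hsqrt : 0 < √ε := sqrt_pos.mpr hε
  simp_rw [sq_one_sub_exp_neg_mul_sq_div_sq hε.le, integral_const_mul,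
    Measure.integral_comp_mul_left (fun η : ℝ => (1 - exp (-η ^ 2)) ^ 2 / η ^ 2),
    abs_of_pos (inv_pos.mpr hsqrt), smul_eq_mul, ← mul_assoc]
  congr 1
  field_simp
  exact (sq_sqrt hε.le).symm

lemma integrable_sq_one_sub_exp_neg_mul_sq_div_sq {ε : ℝ} (hε : 0 < ε) :
    Integrable (fun ξ : ℝ => (1 - exp (-ε * ξ ^ 2)) ^ 2 / ξ ^ 2) := by
  simp_rw [sq_one_sub_exp_neg_mul_sq_div_sq hε.le]
  exact (integrable_sq_one_sub_exp_neg_sq_div_sq.comp_mul_left'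
    (sqrt_pos.mpr hε).ne').const_mul ε

lemma integral_exp_mul_add_le {k d a b : ℝ} (hk : 0 < k) (hb : k * b + d ≤ 0) :
    ∫ s in a..b, exp (k * s + d) ≤ k⁻¹ := by
  rw [intervalIntegral.integral_comp_mul_add (fun x => exp x) hk.ne', integral_exp, smul_eq_mul]
  have := exp_le_one_iff.mpr hb
  have := exp_pos (k * a + d)
  have := inv_pos.mpr hk
  nlinarith

lemma integral_Ioo_exp_neg_two_mul_sub_mul_sq_le {t a b ξ : ℝ} (hab : a ≤ b) (hbt : b ≤ t)
    (hξ : ξ ≠ 0) :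
    ∫ s in Set.Ioo a b, exp (-2 * (t - s) * ξ ^ 2) ≤ (2 * ξ ^ 2)⁻¹ := by
  rw [← integral_Ioc_eq_integral_Ioo, ← intervalIntegral.integral_of_le hab]
  have hk : 0 < 2 * ξ ^ 2 := by positivity
  convert integral_exp_mul_add_le (a := a) (b := b) hk (d := -2 * t * ξ ^ 2) (by nlinarith) using 4
  ring

lemma integrable_prod_of_ae_norm_le {α β : Type*} [MeasurableSpace α] [MeasurableSpace β]
    {μ : Measure α} {ν : Measure β} [IsFiniteMeasure μ] [SFinite ν] {F : α → β → ℝ}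
    {g : β → ℝ} (hF : AEStronglyMeasurable (Function.uncurry F) (μ.prod ν))
    (hg : Integrable g ν) (hFg : ∀ᵐ a ∂μ, ∀ b, ‖F a b‖ ≤ g b) :
    Integrable (Function.uncurry F) (μ.prod ν) := by
  refine ((integrable_const (1 : ℝ)).mul_prod hg).mono' hF ?_
  filter_upwards [Measure.quasiMeasurePreserving_fst.ae hFg] with p hp
  simpa [Function.uncurry] using hp p.2

lemma integral_Ioo_exp_mul_sq_one_sub_exp_le {t a b ε : ℝ} (hab : a ≤ b) (hbt : b ≤ t)
    (ξ : ℝ) :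
    ∫ s in Set.Ioo a b, exp (-2 * (t - s) * ξ ^ 2) * (1 - exp (-ε * ξ ^ 2)) ^ 2
      ≤ 1 / 2 * ((1 - exp (-ε * ξ ^ 2)) ^ 2 / ξ ^ 2) := by
  rw [integral_mul_const]
  rcases eq_or_ne ξ 0 with rfl | hξ
  · simp
  calc (∫ s in Set.Ioo a b, exp (-2 * (t - s) * ξ ^ 2)) * (1 - exp (-ε * ξ ^ 2)) ^ 2
      ≤ (2 * ξ ^ 2)⁻¹ * (1 - exp (-ε * ξ ^ 2)) ^ 2 := by
        gcongr
        exact integral_Ioo_exp_neg_two_mul_sub_mul_sq_le hab hbt hξ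
    _ = 1 / 2 * ((1 - exp (-ε * ξ ^ 2)) ^ 2 / ξ ^ 2) := by
        field_simp

theorem integral_Ioo_integral_exp_mul_sq_one_sub_exp_le {t a b ε : ℝ} (hab : a ≤ b)
    (hbt : b < t) (hε : 0 < ε) :
    ∫ s in Set.Ioo a b, ∫ ξ : ℝ, exp (-2 * (t - s) * ξ ^ 2) * (1 - exp (-ε * ξ ^ 2)) ^ 2
      ≤ 1 / 2 * (∫ η : ℝ, (1 - exp (-η ^ 2)) ^ 2 / η ^ 2) * √ε := by
  set f : ℝ → ℝ → ℝ := fun s ξ => exp (-2 * (t - s) * ξ ^ 2) * (1 - exp (-ε * ξ ^ 2)) ^ 2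
  have hcont : Continuous (Function.uncurry f) := by
    change Continuous fun p : ℝ × ℝ =>
      exp (-2 * (t - p.1) * p.2 ^ 2) * (1 - exp (-ε * p.2 ^ 2)) ^ 2
    fun_prop
  have hdom : ∀ s ∈ Set.Ioo a b, ∀ ξ, ‖f s ξ‖ ≤ exp (-(2 * (t - b)) * ξ ^ 2) := by
    intro s hs ξ
    have hεξ : 0 ≤ ε * ξ ^ 2 := by positivity
    rw [norm_of_nonneg (by positivity)]
    calc f s ξ = exp (-2 * (t - s) * ξ ^ 2) * (1 - exp (-ε * ξ ^ 2)) ^ 2 := rfl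
      _ ≤ exp (-2 * (t - s) * ξ ^ 2) * 1 := by
          gcongr
          simpa only [neg_mul] using sq_one_sub_exp_neg_le_one hεξ
      _ ≤ exp (-(2 * (t - b)) * ξ ^ 2) := by
          rw [mul_one, exp_le_exp]
          nlinarith [hs.2, sq_nonneg ξ]
  have hprod : Integrable (Function.uncurry f) ((volume.restrict (Set.Ioo a b)).prod volume) :=
    integrable_prod_of_ae_norm_le hcont.aestronglyMeasurable
      (integrable_exp_neg_mul_sq (by linarith)) (ae_restrict_of_forall_mem measurableSet_Ioo hdom)
  calc ∫ s in Set.Ioo a b, ∫ ξ : ℝ, f s ξ = ∫ ξ : ℝ, ∫ s in Set.Ioo a b, f s ξ :=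
        integral_integral_swap hprod
    _ ≤ ∫ ξ : ℝ, 1 / 2 * ((1 - exp (-ε * ξ ^ 2)) ^ 2 / ξ ^ 2) :=
        integral_mono hprod.integral_prod_right
          ((integrable_sq_one_sub_exp_neg_mul_sq_div_sq hε).const_mul _)
          (integral_Ioo_exp_mul_sq_one_sub_exp_le hab hbt.le)
    _ = 1 / 2 * (∫ η : ℝ, (1 - exp (-η ^ 2)) ^ 2 / η ^ 2) * √ε := by
        rw [integral_const_mul, integral_sq_one_sub_exp_neg_mul_sq_div_sq hε]
        ring

theorem stmt5 :
    Integrable (fun η : ℝ => (1 - Real.exp (-η ^ 2)) ^ 2 / η ^ 2) ∧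
    ∀ θ ε t : ℝ, 0 < θ → θ < 1 → 0 < ε → ε ^ θ ≤ t →
      (∫ s in Set.Ioo (0 : ℝ) (t - ε ^ θ), ∫ ξ : ℝ,
          Real.exp (-2 * (t - s) * ξ ^ 2) * (1 - Real.exp (-ε * ξ ^ 2)) ^ 2) ≤
        (1 / 2) * (∫ η : ℝ, (1 - Real.exp (-η ^ 2)) ^ 2 / η ^ 2) * ε ^ ((1 : ℝ) / 2) := by
  refine ⟨integrable_sq_one_sub_exp_neg_sq_div_sq, fun θ ε t _ _ hε hεt => ?_⟩
  rw [← sqrt_eq_rpow]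
  exact integral_Ioo_integral_exp_mul_sq_one_sub_exp_le (by linarith)
    (by linarith [rpow_pos_of_pos hε θ]) hε
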